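/- Let G be a directed weighted graph containing a negative-weight cycle reachable from a source r, and let C be such a cycle with the minimum number q of hops. If q > 2Γ and the canonical replacement cycle C̃ (obtained by replacing the q-hop path of C with the canonical q-hop-limited shortest path) contains vertices of V' spaced at most Γ hops apart, then the V'-vertices on C̃ in cyclic order form a cycle of negative total weight in the virtual digraph G' (where arc weights are Γ-limited distances in G). -/

import Mathlib

/-!
Cut `C̃` at the sampled indices `0 = j₀ < j₁ < ⋯ < j_k = q`. Consecutive sampled vertices are at
most `Γ` hops apart along `C̃`, so the arc of `G'` between them weighs at most the segment of `C̃`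
joining them. Summing over the segments, the sampled cycle in `G'` weighs at most
`ω(C̃) ≤ ω(C) < 0`.
-/

namespace Stmt16

variable {V : Type*}

/-- Endpoint of a walk starting at `u` with subsequent vertices given by the list. -/
def last : V → List V → V
  | u, [] => u
  | _, x :: xs => last x xs

/-- Weight of a directed walk starting at `u` (non-arcs have weight `⊤`). -/
noncomputable def cost (w : V → V → EReal) : V → List V → EReal
  | _, [] => 0
  | u, x :: xs => w u x + cost w x xs

/-- `h`-hop-limited distance from `u` to `v`. -/
noncomputable def hdist (w : V → V → EReal) (h : ℕ) (u v : V) : EReal :=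
  ⨅ p ∈ {p : List V | p.length ≤ h ∧ last u p = v}, cost w u p

/-- Shortest-path distance from `u` to `v`. -/
noncomputable def dist (w : V → V → EReal) (u v : V) : EReal :=
  ⨅ h : ℕ, hdist w h u v

lemma cost_append (w : V → V → EReal) (u : V) (xs ys : List V) :
    cost w u (xs ++ ys) = cost w u xs + cost w (last u xs) ys := by
  induction xs generalizing u with
  | nil => simp [cost, last]
  | cons x xs ih => simp [cost, last, ih, add_assoc]

lemma hdist_le_cost (w : V → V → EReal) {h : ℕ} {u v : V} {p : List V}
    (hlen : p.length ≤ h) (hlast : last u p = v) : hdist w h u v ≤ cost w u p :=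
  iInf₂_le p ⟨hlen, hlast⟩

lemma last_map {α : Type*} (p : α → V) (a : α) (t : List α) :
    last (p a) (t.map p) = p (t.getLastD a) := by
  induction t generalizing a with
  | nil => rfl
  | cons b t ih => rw [List.getLastD_cons]; exact ih b

lemma head_le_getLastD_of_isChain {α : Type*} [Preorder α] {a : α} {t : List α}
    (h : (a :: t).IsChain (· ≤ ·)) : a ≤ t.getLastD a := by
  induction t generalizing a with
  | nil => exact le_rfl
  | cons b t ih =>
    obtain ⟨hab, hchain⟩ := List.isChain_cons_cons.1 h
    rw [List.getLastD_cons]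
    exact hab.trans (ih hchain)

/-- The walk from `p a` to `p b` along `p`; as in `cost`, the start vertex is not listed. -/
def subwalk (p : ℕ → V) (a b : ℕ) : List V :=
  (List.range' (a + 1) (b - a)).map p

@[simp]
lemma length_subwalk (p : ℕ → V) (a b : ℕ) : (subwalk p a b).length = b - a := by
  simp [subwalk]

lemma last_subwalk (p : ℕ → V) {a b : ℕ} (hab : a ≤ b) : last (p a) (subwalk p a b) = p b := by
  rw [subwalk, last_map, List.getLastD_eq_getLast?, List.getLast?_range']
  split_ifs <;> simp only [Option.getD_none, Option.getD_some] <;> congr 1 <;> omega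

lemma subwalk_append (p : ℕ → V) {a b c : ℕ} (hab : a ≤ b) (hbc : b ≤ c) :
    subwalk p a b ++ subwalk p b c = subwalk p a c := by
  rw [subwalk, subwalk, subwalk, ← List.map_append, show b + 1 = a + 1 + (b - a) by omega,
    List.range'_append_1, show b - a + (c - b) = c - a by omega]

lemma subwalk_getD_zero_length (u : V) (l : List V) :
    subwalk (fun j => (u :: l).getD j u) 0 l.length = l := by
  apply List.ext_getElem (by simp)
  intro i _ hi
  simp [subwalk, List.getElem_range', Nat.add_comm 1 i, hi]

lemma cost_map_le_cost_subwalk (w w' : V → V → EReal) {Γ : ℕ} {S : Set V}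
    (hw' : ∀ u ∈ S, ∀ v ∈ S, w' u v ≤ hdist w Γ u v) (p : ℕ → V) (a : ℕ) (t : List ℕ)
    (hchain : (a :: t).IsChain (fun a b => a < b ∧ b - a ≤ Γ)) (hS : ∀ j ∈ a :: t, p j ∈ S) :
    cost w' (p a) (t.map p) ≤ cost w (p a) (subwalk p a (t.getLastD a)) := by
  induction t generalizing a with
  | nil => simp [cost, subwalk]
  | cons b t ih =>
    obtain ⟨⟨hab, hgap⟩, htail⟩ := List.isChain_cons_cons.1 hchain
    have hbc : b ≤ t.getLastD b := head_le_getLastD_of_isChain (htail.imp fun _ _ h => h.1.le)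
    have hhop : w' (p a) (p b) ≤ cost w (p a) (subwalk p a b) :=
      (hw' _ (hS a (by simp)) _ (hS b (by simp))).trans
        (hdist_le_cost w (by simpa using hgap) (last_subwalk p hab.le))
    calc cost w' (p a) ((b :: t).map p)
        = w' (p a) (p b) + cost w' (p b) (t.map p) := rfl
      _ ≤ cost w (p a) (subwalk p a b) + cost w (p b) (subwalk p b (t.getLastD b)) :=
          add_le_add hhop (ih b htail fun j hj => hS j (List.mem_cons_of_mem a hj))
      _ = cost w (p a) (subwalk p a ((b :: t).getLastD a)) := by
          rw [List.getLastD_cons, ← subwalk_append p hab.le hbc, cost_append, last_subwalk p hab.le]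

theorem sampled_negative_cycle_general [DecidableEq V]
    (w : V → V → EReal)
    (V' : Finset V) (Γ : ℕ)
    (c0 : V) (pC : List V)
    (hCne : pC ≠ []) (hCneg : cost w c0 pC < 0)
    (pT : List V)
    (hTlen : pT.length = pC.length) (hTcyc : last c0 pT = c0)
    (hTle : cost w c0 pT ≤ cost w c0 pC)
    (js : List ℕ)
    (hjs : js.Chain' (fun a b => a < b ∧ b - a ≤ Γ))
    (hjs0 : js.head? = some 0) (hjsq : js.getLast? = some pC.length)
    (hjsV' : ∀ j ∈ js, ((c0 :: pT).getD j c0) ∈ V')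
    (w' : V → V → EReal)
    (hw' : ∀ u v, w' u v = if u ∈ V' ∧ v ∈ V' then hdist w Γ u v else ⊤) :
    (js.drop 1).map (fun j => (c0 :: pT).getD j c0) ≠ [] ∧
    last c0 ((js.drop 1).map (fun j => (c0 :: pT).getD j c0)) = c0 ∧
    cost w' c0 ((js.drop 1).map (fun j => (c0 :: pT).getD j c0)) < 0 := by
  set p : ℕ → V := fun j => (c0 :: pT).getD j c0
  obtain ⟨t, rfl⟩ : ∃ t, js = 0 :: t := by
    cases js with
    | nil => simp at hjs0
    | cons a t => exact ⟨t, by simpa using hjs0⟩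
  have hend : t.getLastD 0 = pT.length := by
    rw [hTlen, ← List.getLastD_cons (a := 0), List.getLastD_eq_getLast?, hjsq, Option.getD_some]
  have hwalk : subwalk p 0 pT.length = pT := subwalk_getD_zero_length c0 pT
  have hp_end : p pT.length = c0 := by
    rw [← last_subwalk p (Nat.zero_le _), hwalk]
    exact hTcyc
  refine ⟨?_, ?_, ?_⟩
  · have hpos : 0 < pT.length := hTlen ▸ List.length_pos_iff.2 hCne
    have ht : t ≠ [] := by
      rintro rfl
      simp only [List.getLastD_nil] at hend
      omega
    simpa using ht
  · have hlast := last_map p 0 t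
    rw [hend, hp_end] at hlast
    exact hlast
  · have hw'_le : ∀ u ∈ (V' : Set V), ∀ v ∈ (V' : Set V), w' u v ≤ hdist w Γ u v := by
      intro u hu v hv
      rw [hw', if_pos ⟨hu, hv⟩]
    calc cost w' c0 (t.map p)
        ≤ cost w c0 (subwalk p 0 (t.getLastD 0)) :=
          cost_map_le_cost_subwalk w w' hw'_le p 0 t hjs hjsV'
      _ = cost w c0 pT := by rw [hend, hwalk]
      _ ≤ cost w c0 pC := hTle
      _ < 0 := hCneg

/-- If a directed graph contains a negative-weight cycle reachable from `r`, `C` is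
such a cycle with the minimum number `q` of hops, `q > 2Γ`, and the canonical
replacement cycle `C̃` (same hop count, weight at most that of `C`) has sampled
vertices spaced at most `Γ` hops apart, then the sampled vertices on `C̃`, in cyclic
order, form a negative-weight cycle in the virtual digraph `G'` whose arcs are
weighted by `Γ`-hop-limited distances in `G`. -/
theorem sampled_negative_cycle [Fintype V] [DecidableEq V]
    (w : V → V → EReal) (hnb : ∀ u v, w u v ≠ ⊥)
    (V' : Finset V) (Γ : ℕ) (hΓ : 1 ≤ Γ)
    (r : V)
    (c0 : V) (pC : List V)
    (hCne : pC ≠ []) (hCcyc : last c0 pC = c0) (hCneg : cost w c0 pC < 0)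
    (hreach : dist w r c0 ≠ ⊤)
    (hminhops : ∀ (v : V) (p : List V), p ≠ [] → last v p = v → cost w v p < 0 →
      pC.length ≤ p.length)
    (hq : 2 * Γ < pC.length)
    (pT : List V)
    (hTlen : pT.length = pC.length) (hTcyc : last c0 pT = c0)
    (hTle : cost w c0 pT ≤ cost w c0 pC)
    (js : List ℕ)
    (hjs : js.Chain' (fun a b => a < b ∧ b - a ≤ Γ))
    (hjs0 : js.head? = some 0) (hjsq : js.getLast? = some pC.length)
    (hjsV' : ∀ j ∈ js, ((c0 :: pT).getD j c0) ∈ V')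
    (w' : V → V → EReal)
    (hw' : ∀ u v, w' u v = if u ∈ V' ∧ v ∈ V' then hdist w Γ u v else ⊤) :
    (js.drop 1).map (fun j => (c0 :: pT).getD j c0) ≠ [] ∧
    last c0 ((js.drop 1).map (fun j => (c0 :: pT).getD j c0)) = c0 ∧
    cost w' c0 ((js.drop 1).map (fun j => (c0 :: pT).getD j c0)) < 0 :=
  sampled_negative_cycle_general w V' Γ c0 pC hCne hCneg pT hTlen hTcyc hTle js hjs hjs0 hjsq hjsV'
    w' hw'

end Stmt16
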